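/- Assume r ≥ 2 and n i ≠ −1 for all i ∈ Fin r. For each index k ∈ Fin r, consider the element η k of ∏_{i < j} ZMod (N i j) whose (i, j)-component is the image of 1 in ZMod (N k j) when i = k, the image of −1 in ZMod (N i k) when j = k, and 0 when k ∉ {i, j}. Then the additive order of η k equals ∏_{j ≠ k} N k j. -/
import Mathlib


/-- `N i j`: the gcd (as a nonnegative integer) of the family consisting of `n k` for
`k ∉ {i, j}` together with `n i + 1` and `n j + 1`. -/
def Npair {r : ℕ} (n : Fin r → ℤ) (i j : Fin r) : ℕ :=
  Nat.gcd ((Finset.univ \ {i, j}).gcd fun k => (n k).natAbs)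
    (Nat.gcd (n i + 1).natAbs (n j + 1).natAbs)

/-- The element `η k` of `∏_{i < j} ZMod (N i j)`, whose `(i, j)`-component is `1` if `i = k`,
`-1` if `j = k`, and `0` if `k ∉ {i, j}`. -/
def eta {r : ℕ} (n : Fin r → ℤ) (k : Fin r) :
    (p : {p : Fin r × Fin r // p.1 < p.2}) → ZMod (Npair n p.1.1 p.1.2) :=
  fun p => if p.1.1 = k then 1 else if p.1.2 = k then -1 else 0

lemma Npair_comm {r : ℕ} (n : Fin r → ℤ) (i j : Fin r) : Npair n i j = Npair n j i := by
  unfold Npair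
  rw [Finset.pair_comm, Nat.gcd_comm (n i + 1).natAbs]

lemma Npair_dvd_natAbs {r : ℕ} (n : Fin r → ℤ) {i j m : Fin r} (hmi : m ≠ i) (hmj : m ≠ j) :
    Npair n i j ∣ (n m).natAbs := by
  refine (Nat.gcd_dvd_left _ _).trans (Finset.gcd_dvd ?_)
  simp [Finset.mem_sdiff, hmi, hmj]

lemma Npair_dvd_add_one_left {r : ℕ} (n : Fin r → ℤ) (i j : Fin r) :
    Npair n i j ∣ (n i + 1).natAbs :=
  (Nat.gcd_dvd_right _ _).trans (Nat.gcd_dvd_left _ _)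

lemma Npair_coprime {r : ℕ} (n : Fin r → ℤ) (k : Fin r) {j j' : Fin r}
    (hj : j ≠ k) (hj' : j' ≠ k) (hjj : j ≠ j') :
    Nat.Coprime (Npair n k j) (Npair n k j') := by
  have h1 : Npair n k j ∣ (n j').natAbs := Npair_dvd_natAbs n hj' (Ne.symm hjj)
  have h2 : Npair n k j' ∣ (n j' + 1).natAbs := by
    rw [Npair_comm]; exact Npair_dvd_add_one_left n j' k
  have d1 : (Nat.gcd (Npair n k j) (Npair n k j') : ℤ) ∣ n j' :=
    Int.natCast_dvd.mpr ((Nat.gcd_dvd_left _ _).trans h1)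
  have d2 : (Nat.gcd (Npair n k j) (Npair n k j') : ℤ) ∣ n j' + 1 :=
    Int.natCast_dvd.mpr ((Nat.gcd_dvd_right _ _).trans h2)
  have hone : (Nat.gcd (Npair n k j) (Npair n k j') : ℤ) ∣ 1 := by
    have := dvd_sub d2 d1; simpa using this
  exact Nat.dvd_one.mp (by exact_mod_cast hone)

lemma nat_prod_dvd {ι : Type*} [DecidableEq ι] {s : Finset ι} {f : ι → ℕ} {m : ℕ}
    (hc : ∀ a ∈ s, ∀ b ∈ s, a ≠ b → Nat.Coprime (f a) (f b))
    (hd : ∀ a ∈ s, f a ∣ m) : (∏ a ∈ s, f a) ∣ m := by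
  induction s using Finset.induction with
  | empty => simp
  | @insert a s ha ih =>
    rw [Finset.prod_insert ha]
    refine Nat.Coprime.mul_dvd_of_dvd_of_dvd ?_ (hd _ (Finset.mem_insert_self a s)) ?_
    · exact Nat.Coprime.prod_right fun b hb =>
        hc a (Finset.mem_insert_self a s) b (Finset.mem_insert_of_mem hb)
          (fun h => ha (h ▸ hb))
    · exact ih (fun x hx y hy hxy => hc x (Finset.mem_insert_of_mem hx) y
        (Finset.mem_insert_of_mem hy) hxy) (fun x hx => hd x (Finset.mem_insert_of_mem hx))

/-- If `r ≥ 2` and no `n i` equals `-1`, then the additive order of `η k` equals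
`∏_{j ≠ k} N k j`. -/
theorem addOrderOf_eta {r : ℕ} (hr : 2 ≤ r) (n : Fin r → ℤ) (hn : ∀ i, n i ≠ -1)
    (k : Fin r) :
    addOrderOf (eta n k) = ∏ j ∈ Finset.univ.erase k, Npair n k j := by
  set P := ∏ j ∈ Finset.univ.erase k, Npair n k j with hP
  have hdvdP : ∀ j : Fin r, j ≠ k → Npair n k j ∣ P := fun j hj =>
    Finset.dvd_prod_of_mem _ (Finset.mem_erase.mpr ⟨hj, Finset.mem_univ j⟩)
  have hPsmul : P • eta n k = 0 := by
    funext p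
    obtain ⟨⟨i, j⟩, hij⟩ := p
    simp only [Pi.smul_apply, Pi.zero_apply]
    by_cases h1 : i = k
    · subst h1
      have hjk : j ≠ i := (ne_of_gt hij)
      have hcomp : eta n i ⟨(i, j), hij⟩ = 1 := by simp [eta]
      rw [hcomp]
      obtain ⟨c, hc⟩ := hdvdP j hjk
      have : (P : ZMod (Npair n i j)) = 0 := by
        rw [hc]; push_cast; simp [ZMod.natCast_self]
      simp [nsmul_eq_mul, this]
    · by_cases h2 : j = k
      · subst h2
        have hcomp : eta n j ⟨(i, j), hij⟩ = -1 := by simp [eta, h1]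
        rw [hcomp]
        obtain ⟨c, hc⟩ := hdvdP i h1
        rw [Npair_comm] at hc
        have : (P : ZMod (Npair n i j)) = 0 := by
          rw [hc]; push_cast; simp [ZMod.natCast_self]
        simp [nsmul_eq_mul, this]
      · have hcomp : eta n k ⟨(i, j), hij⟩ = 0 := by simp [eta, h1, h2]
        rw [hcomp, smul_zero]
  have h1 : addOrderOf (eta n k) ∣ P := addOrderOf_dvd_of_nsmul_eq_zero hPsmul
  have h2 : ∀ j : Fin r, j ≠ k → Npair n k j ∣ addOrderOf (eta n k) := by
    intro j hj
    have hzero : addOrderOf (eta n k) • eta n k = 0 := addOrderOf_nsmul_eq_zero _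
    rcases lt_or_gt_of_ne (hj : j ≠ k) with hlt | hgt
    · set p : {p : Fin r × Fin r // p.1 < p.2} := ⟨(j, k), hlt⟩
      have hcomp : eta n k p = -1 := by simp [eta, p, hj]
      have hd : addOrderOf (eta n k p) ∣ addOrderOf (eta n k) := by
        apply addOrderOf_dvd_of_nsmul_eq_zero
        have := congrFun hzero p
        simpa using this
      rwa [hcomp, addOrderOf_neg, ZMod.addOrderOf_one, Npair_comm n j k] at hd
    · set p : {p : Fin r × Fin r // p.1 < p.2} := ⟨(k, j), hgt⟩
      have hcomp : eta n k p = 1 := by simp [eta, p]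
      have hd : addOrderOf (eta n k p) ∣ addOrderOf (eta n k) := by
        apply addOrderOf_dvd_of_nsmul_eq_zero
        have := congrFun hzero p
        simpa using this
      rwa [hcomp, ZMod.addOrderOf_one] at hd
  have h3 : P ∣ addOrderOf (eta n k) := by
    rw [hP]
    refine nat_prod_dvd ?_ ?_
    · intro a ha b hb hab
      exact Npair_coprime n k (Finset.mem_erase.mp ha).1 (Finset.mem_erase.mp hb).1 hab
    · intro a ha
      exact h2 a (Finset.mem_erase.mp ha).1
  exact Nat.dvd_antisymm h1 h3
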